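/- arXiv:2305.02669 — 4 statements merged into one kernel-verified Lean document; each statement's English description precedes it below -/
import Mathlib

section
/- For a vertex u of a finite simple graph G with neighborhood N(u), the number of edges of G ⋆ u equals |E(G)| + C(|N(u)|, 2) − 2·e_G(N(u)), where e_G(N(u)) is the number of edges of G with both endpoints in N(u). -/
/-- Local complementation of `G` at `u`: adjacency between two distinct common
neighbors of `u` is toggled; all other adjacencies are unchanged. -/
def localComp {V : Type*} (G : SimpleGraph V) (u : V) : SimpleGraph V where
  Adj v w := v ≠ w ∧ Xor' (G.Adj v w) (G.Adj u v ∧ G.Adj u w)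
  symm := by
    constructor
    intro v w h
    refine ⟨h.1.symm, ?_⟩
    rcases h.2 with ⟨ha, hb⟩ | ⟨ha, hb⟩
    · exact Or.inl ⟨G.adj_symm ha, fun hc => hb ⟨hc.2, hc.1⟩⟩
    · exact Or.inr ⟨⟨ha.2, ha.1⟩, fun hc => hb (G.adj_symm hc)⟩
  loopless := ⟨fun v h => h.1 rfl⟩

instance {V : Type*} (G : SimpleGraph V) [DecidableRel G.Adj] [DecidableEq V] (u : V) :
    DecidableRel (localComp G u).Adj := fun v w =>
  inferInstanceAs (Decidable (v ≠ w ∧ (G.Adj v w ∧ ¬(G.Adj u v ∧ G.Adj u w) ∨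
      (G.Adj u v ∧ G.Adj u w) ∧ ¬G.Adj v w)))

/-- The number of edges of `G` with both endpoints in the set `s` (each unordered
edge is counted once: ordered adjacent pairs divided by two). -/
def edgesWithin {V : Type*} [Fintype V] [DecidableEq V] (G : SimpleGraph V)
    [DecidableRel G.Adj] (s : Finset V) : ℕ :=
  (Finset.univ.filter (fun p : V × V => p.1 ∈ s ∧ p.2 ∈ s ∧ G.Adj p.1 p.2)).card / 2

/-!
Count ordered pairs of adjacent vertices, which are twice the edges. The ordered adjacency
relation of `G ⋆ u` is the symmetric difference of that of `G` with the off-diagonal of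
`N(u) × N(u)`, and these two sets meet exactly in the ordered edges inside `N(u)`. Hence
`2|E(G ⋆ u)| = 2|E(G)| + 2 C(|N(u)|, 2) - 2 · 2 e_G(N(u))`.
-/

open Finset
open scoped symmDiff

namespace Finset

variable {α : Type*}

theorem card_symmDiff_add_two_mul_card_inter [DecidableEq α] (s t : Finset α) :
    #(s ∆ t) + 2 * #(s ∩ t) = #s + #t := by
  have hs := card_sdiff_add_card_inter s t
  have ht : #(t \ s) + #(s ∩ t) = #t := by rw [inter_comm]; exact card_sdiff_add_card_inter t s
  rw [symmDiff_def, sup_eq_union, card_union_of_disjoint disjoint_sdiff_sdiff]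
  omega

theorem card_offDiag_eq_two_mul_choose_two (s : Finset α) :
    #s.offDiag = 2 * (#s).choose 2 := by
  rw [offDiag_card, Nat.choose_two_right, Nat.mul_div_cancel' (Nat.even_mul_pred_self _).two_dvd,
    Nat.mul_sub_one]

end Finset

namespace SimpleGraph

variable {V : Type*} [Fintype V] [DecidableEq V] (G : SimpleGraph V) [DecidableRel G.Adj]

theorem two_mul_edgesWithin (s : Finset V) :
    2 * edgesWithin G s = #{p : V × V | p.1 ∈ s ∧ p.2 ∈ s ∧ G.Adj p.1 p.2} := by
  classical
  -- the subgraph of `G` induced on `s` has exactly the ordered edges counted by `edgesWithin`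
  have h := ((⊤ : G.Subgraph).induce s).spanningCoe.two_mul_card_edgeFinset
  simp only [Subgraph.spanningCoe_adj, Subgraph.induce_adj, Subgraph.top_adj, mem_coe] at h
  obtain ⟨k, hk⟩ : ∃ k, #{p : V × V | p.1 ∈ s ∧ p.2 ∈ s ∧ G.Adj p.1 p.2} = 2 * k :=
    ⟨_, by convert h.symm⟩
  rw [edgesWithin, hk, Nat.mul_div_cancel_left _ two_pos]

theorem filter_adj_localComp (u : V) :
    univ.filter (fun p : V × V => (localComp G u).Adj p.1 p.2) =
      univ.filter (fun p : V × V => G.Adj p.1 p.2) ∆ (G.neighborFinset u).offDiag := by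
  ext ⟨v, w⟩
  simp only [mem_filter, mem_univ, true_and, mem_symmDiff, mem_offDiag, mem_neighborFinset]
  change v ≠ w ∧ (G.Adj v w ∧ ¬(G.Adj u v ∧ G.Adj u w) ∨ (G.Adj u v ∧ G.Adj u w) ∧ ¬G.Adj v w) ↔ _
  have := G.ne_of_adj (a := v) (b := w)
  tauto

theorem filter_adj_inter_offDiag (s : Finset V) :
    univ.filter (fun p : V × V => G.Adj p.1 p.2) ∩ s.offDiag =
      univ.filter (fun p : V × V => p.1 ∈ s ∧ p.2 ∈ s ∧ G.Adj p.1 p.2) := by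
  ext ⟨v, w⟩
  simp only [mem_inter, mem_filter, mem_univ, true_and, mem_offDiag]
  constructor
  · rintro ⟨hadj, hv, hw, -⟩
    exact ⟨hv, hw, hadj⟩
  · rintro ⟨hv, hw, hadj⟩
    exact ⟨hadj, hv, hw, hadj.ne⟩

end SimpleGraph

/-- Edge count after local complementation:
`|E(G ⋆ u)| = |E(G)| + C(|N(u)|, 2) - 2 · e_G(N(u))`. -/
theorem localComp_edgeCount {V : Type*} [Fintype V] [DecidableEq V]
    (G : SimpleGraph V) [DecidableRel G.Adj] (u : V) :
    ((localComp G u).edgeFinset.card : ℤ) =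
      (G.edgeFinset.card : ℤ) + ((G.degree u).choose 2 : ℤ)
        - 2 * (edgesWithin G (G.neighborFinset u) : ℤ) := by
  have h := card_symmDiff_add_two_mul_card_inter
    (univ.filter fun p : V × V => G.Adj p.1 p.2) (G.neighborFinset u).offDiag
  rw [← G.filter_adj_localComp u, G.filter_adj_inter_offDiag, ← G.two_mul_edgesWithin,
    card_offDiag_eq_two_mul_choose_two, G.card_neighborFinset_eq_degree,
    ← G.two_mul_card_edgeFinset, ← (localComp G u).two_mul_card_edgeFinset] at h
  omega
end

section
/- The pivot along edge uv toggles exactly the edges between the three sets A = N(u) ∩ N(v), B = N(u) \ (N(v) ∪ {v}), C = N(v) \ (N(u) ∪ {u}): for x, y lying in two different sets among A, B, C, x and y are adjacent in G ∧ uv iff they are not adjacent in G; adjacency within each set, and all adjacencies not between these sets (except the swap of u and v's roles), are preserved in the following sense: for x, y both in the same one of A, B, C, adjacency is unchanged. -/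
/-- The pivot of `G` along the edge `uv`: `G ∧ uv = G ⋆ u ⋆ v ⋆ u`. -/
def pivot {V : Type*} (G : SimpleGraph V) (u v : V) : SimpleGraph V :=
  localComp (localComp (localComp G u) v) u

theorem xor_pivot_identity (p a b c d : Prop) :
    Xor (Xor (Xor p (a ∧ c)) (Xor b a ∧ Xor d c)) (b ∧ d) ↔ Xor p (Xor (a ∧ d) (b ∧ c)) := by
  grind

namespace SimpleGraph

variable {V : Type*} {G : SimpleGraph V} {u v x y : V}

theorem localComp_adj :
    (localComp G u).Adj x y ↔ x ≠ y ∧ Xor (G.Adj x y) (G.Adj u x ∧ G.Adj u y) :=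
  Iff.rfl

theorem localComp_adj_left : (localComp G u).Adj u x ↔ G.Adj u x := by
  rw [localComp_adj]
  grind [Adj.ne, SimpleGraph.irrefl]

theorem localComp_adj_of_adj (huv : G.Adj u v) (hxv : x ≠ v) :
    (localComp G u).Adj v x ↔ Xor (G.Adj v x) (G.Adj u x) := by
  simp only [localComp_adj, huv, true_and, hxv.symm, ne_eq, not_false_eq_true]

theorem localComp_localComp_adj_left (huv : G.Adj u v) (hxu : x ≠ u) (hxv : x ≠ v) :
    (localComp (localComp G u) v).Adj u x ↔ G.Adj v x := by
  rw [localComp_adj_of_adj (localComp_adj_left.mpr huv).symm hxu, localComp_adj_left,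
    localComp_adj_of_adj huv hxv]
  grind

theorem pivot_adj (huv : G.Adj u v) (hxu : x ≠ u) (hxv : x ≠ v) (hyu : y ≠ u) (hyv : y ≠ v) :
    (pivot G u v).Adj x y ↔
      x ≠ y ∧ Xor (G.Adj x y) (Xor (G.Adj u x ∧ G.Adj v y) (G.Adj v x ∧ G.Adj u y)) := by
  rw [pivot, localComp_adj, localComp_localComp_adj_left huv hxu hxv,
    localComp_localComp_adj_left huv hyu hyv, localComp_adj, localComp_adj_of_adj huv hxv,
    localComp_adj_of_adj huv hyv, localComp_adj, ← xor_pivot_identity]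
  grind

theorem pivot_adj_iff_not_adj (huv : G.Adj u v) (hxu : x ≠ u) (hxv : x ≠ v) (hyu : y ≠ u)
    (hyv : y ≠ v) (hxy : x ≠ y) (htoggle : Xor (G.Adj u x ∧ G.Adj v y) (G.Adj v x ∧ G.Adj u y)) :
    (pivot G u v).Adj x y ↔ ¬G.Adj x y := by
  rw [pivot_adj huv hxu hxv hyu hyv, xor_comm, eq_true htoggle, xor_true]
  exact and_iff_right hxy

theorem pivot_adj_iff_adj (huv : G.Adj u v) (hxu : x ≠ u) (hxv : x ≠ v) (hyu : y ≠ u)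
    (hyv : y ≠ v) (hkeep : ¬Xor (G.Adj u x ∧ G.Adj v y) (G.Adj v x ∧ G.Adj u y)) :
    (pivot G u v).Adj x y ↔ G.Adj x y := by
  rw [pivot_adj huv hxu hxv hyu hyv, xor_comm, eq_false hkeep, xor_false, id]
  exact and_iff_right_of_imp Adj.ne

end SimpleGraph

open SimpleGraph in
/-- The pivot along `uv` toggles exactly the edges between the three sets
`A = N(u) ∩ N(v)`, `B = N(u) \ (N(v) ∪ {v})`, `C = N(v) \ (N(u) ∪ {u})`,
and preserves adjacency within each of the three sets. -/
theorem pivot_toggles {V : Type*} (G : SimpleGraph V) (u v : V) (h : G.Adj u v)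
    (A B C : Set V)
    (hA : A = G.neighborSet u ∩ G.neighborSet v)
    (hB : B = G.neighborSet u \ (G.neighborSet v ∪ {v}))
    (hC : C = G.neighborSet v \ (G.neighborSet u ∪ {u})) :
    (∀ x y : V, ((x ∈ A ∧ y ∈ B) ∨ (x ∈ A ∧ y ∈ C) ∨ (x ∈ B ∧ y ∈ C)) →
        ((pivot G u v).Adj x y ↔ ¬ G.Adj x y)) ∧
    (∀ x y : V, x ≠ y →
        ((x ∈ A ∧ y ∈ A) ∨ (x ∈ B ∧ y ∈ B) ∨ (x ∈ C ∧ y ∈ C)) →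
        ((pivot G u v).Adj x y ↔ G.Adj x y)) := by
  subst hA hB hC
  simp only [Set.mem_inter_iff, Set.mem_sdiff, Set.mem_union, Set.mem_singleton_iff,
    mem_neighborSet, not_or]
  refine ⟨fun x y hxy => pivot_adj_iff_not_adj h ?_ ?_ ?_ ?_ ?_ ?_,
    fun x y _ hxy => pivot_adj_iff_adj h ?_ ?_ ?_ ?_ ?_⟩ <;> grind [Adj.ne']
end

section
/- After pivoting along the edge uv, the neighborhoods of u and v are swapped on the rest of the graph: for any vertex w distinct from u and v, w is adjacent to u in G ∧ uv if and only if w is adjacent to v in G, and w is adjacent to v in G ∧ uv if and only if w is adjacent to u in G; moreover u and v remain adjacent. -/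
/-! Local complementation at `u` keeps `N(u)`, and for a neighbor `v` of `u` replaces `N(v)` by
`N(v) Δ N(u)` away from `v`. Along `G ⋆ u ⋆ v ⋆ u`, and away from `u` and `v`, the first step turns
`N(v)` into `N(v) Δ N(u)`, the second turns `N(u)` into `N(u) Δ (N(v) Δ N(u)) = N(v)`, and the third
turns `N(v)` into `(N(v) Δ N(u)) Δ N(v) = N(u)`; the edge `uv` is never toggled. -/

section LocalComplementation

variable {V : Type*} (G : SimpleGraph V)

theorem localComp_adj_center (u w : V) : (localComp G u).Adj u w ↔ G.Adj u w := by
  refine ⟨fun h ↦ ?_, fun h ↦ ⟨h.ne, Or.inl ⟨h, fun hu ↦ G.loopless.irrefl u hu.1⟩⟩⟩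
  rcases h.2 with ⟨huw, _⟩ | ⟨⟨huu, _⟩, _⟩
  · exact huw
  · exact absurd huu (G.loopless.irrefl u)

variable {G}

theorem localComp_adj_of_adj_center {u v w : V} (huv : G.Adj u v) (hvw : v ≠ w) :
    (localComp G u).Adj v w ↔ Xor (G.Adj v w) (G.Adj u w) := by
  change v ≠ w ∧ Xor (G.Adj v w) (G.Adj u v ∧ G.Adj u w) ↔ _
  simp only [hvw, huv, ne_eq, not_false_eq_true, true_and]

theorem localComp_localComp_adj_left {u v w : V} (h : G.Adj u v) (hwu : w ≠ u) (hwv : w ≠ v) :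
    (localComp (localComp G u) v).Adj u w ↔ G.Adj v w := by
  have hvu : (localComp G u).Adj v u := ((localComp_adj_center G u v).2 h).symm
  rw [localComp_adj_of_adj_center hvu hwu.symm, localComp_adj_center,
    localComp_adj_of_adj_center h hwv.symm]
  grind

theorem localComp_localComp_adj_right {u v w : V} (h : G.Adj u v) (hwv : w ≠ v) :
    (localComp (localComp G u) v).Adj v w ↔ Xor (G.Adj v w) (G.Adj u w) := by
  rw [localComp_adj_center, localComp_adj_of_adj_center h hwv.symm]

theorem localComp_localComp_adj_of_adj {u v : V} (h : G.Adj u v) :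
    (localComp (localComp G u) v).Adj u v :=
  ((localComp_adj_center _ v u).2 ((localComp_adj_center G u v).2 h).symm).symm

end LocalComplementation

/-- After pivoting along `uv`, the neighborhoods of `u` and `v` are swapped on the
rest of the graph, and `u` and `v` remain adjacent. -/
theorem pivot_swaps_neighborhoods {V : Type*} (G : SimpleGraph V) (u v : V)
    (h : G.Adj u v) :
    (∀ w : V, w ≠ u → w ≠ v →
        (((pivot G u v).Adj u w ↔ G.Adj v w) ∧ ((pivot G u v).Adj v w ↔ G.Adj u w))) ∧
    (pivot G u v).Adj u v := by
  have huv := localComp_localComp_adj_of_adj h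
  refine ⟨fun w hwu hwv ↦ ⟨?_, ?_⟩, (localComp_adj_center _ u v).2 huv⟩
  · rw [pivot, localComp_adj_center, localComp_localComp_adj_left h hwu hwv]
  · rw [pivot, localComp_adj_of_adj_center huv hwv.symm, localComp_localComp_adj_right h hwv,
      localComp_localComp_adj_left h hwu hwv]
    grind
end

section
/- The fusion rule for Z-spiders is sound: for Z(α) := |0…0⟩⟨0…0| + e^{iα}|1…1⟩⟨1…1| with the appropriate numbers of wires (a linear map on qubits), connecting the single output of the Z-spider Z_m^{1}(α) with m inputs and one output to the single input of the Z-spider Z^{n}_{1}(β) with one input and n outputs yields Z_m^{n}(α+β). -/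
open Complex in
/-- The Z-spider with `m` inputs, `n` outputs and phase `α`:
`|0…0⟩⟨0…0| + e^{iα} |1…1⟩⟨1…1|` as a matrix from `(ℂ²)^{⊗m}` to `(ℂ²)^{⊗n}`,
indexed by computational basis states. -/
noncomputable def Zspider (m n : ℕ) (α : ℝ) :
    Matrix (Fin n → Fin 2) (Fin m → Fin 2) ℂ := fun y x =>
  (if (∀ i, x i = 0) ∧ (∀ j, y j = 0) then 1 else 0) +
  (if (∀ i, x i = 1) ∧ (∀ j, y j = 1) then Complex.exp (α * Complex.I) else 0)

/-- Soundness of the spider fusion rule: connecting the output of `Z_m^1(α)` to the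
input of `Z_1^n(β)` yields `Z_m^n(α+β)`. -/
theorem Zspider_fusion (m n : ℕ) (α β : ℝ) :
    Zspider 1 n β * Zspider m 1 α = Zspider m n (α + β) := by
  ext y x
  rw [Matrix.mul_apply]
  rw [Fintype.sum_equiv (Equiv.funUnique (Fin 1) (Fin 2)) _
    (fun z => Zspider 1 n β y (fun _ => z) * Zspider m 1 α (fun _ => z) x)
    (fun z => by
      congr 2 <;> exact funext fun i => by fin_cases i; rfl)]
  rw [Fin.sum_univ_two]
  simp only [Zspider, Fin.isValue, forall_const, Fin.zero_eq_one_iff, Fin.one_eq_zero_iff,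
    Nat.succ_ne_self, and_false, false_and, and_true, true_and, if_false, if_true,
    OfNat.ofNat_ne_one, OfNat.one_ne_ofNat, Nat.reduceEqDiff]
  push_cast
  rw [show ((α:ℂ)+β)*Complex.I = α*Complex.I + β*Complex.I from by ring, Complex.exp_add]
  split_ifs <;> first | tauto | ring_nf
end
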